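/- arXiv:2406.00896 — 2 statements merged into one kernel-verified Lean document; each statement's English description precedes it below -/
import Mathlib

section
/- Let M be a compact connected orientable n-dimensional C^∞ manifold with a volume form ω such that H^l(M,∂M;ℝ)=0 for all 0<l<n. Then there exists φ = φ^{(0)}+⋯+φ^{(n−1)} with φ^{(l)} ∈ 𝒜^{n−1−l,l}(M Diff_{ω,0}(M,∂M)^δ_•) such that dφ = ω^{(n)} and, for every 0 ≤ l ≤ n−2 and all g₁,…,g_{n−1−l} ∈ Diff_{ω,0}(M,∂M), the form φ^{(l)}(g₁,…,g_{n−1−l}) ∈ Ω^l(M) pulls back to 0 on ∂M. Moreover, for any such φ one has δφ^{(0)} = 0. -/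
namespace TsuboiEuler

/-! ### Group cochains valued in a graded module of differential forms

For a group `G` acting on a manifold by diffeomorphisms, `GC G F k l` models the
space `𝒜^{k,l}` of maps `G^k → Ω^l(M)`; `GCT G F` is an element of the whole double
complex, recorded in every bidegree at once. -/

section GroupCochains

variable {G : Type} [Group G] {F : ℕ → Type} [∀ l, AddCommGroup (F l)]
  [∀ l, Module ℝ (F l)]

/-- The space `𝒜^{k,l}` of `k`-cochains of the group `G` valued in `l`-forms. -/
abbrev GC (G : Type) (F : ℕ → Type) (k l : ℕ) : Type := (Fin k → G) → F l

variable (pull : ∀ l, G → F l →ₗ[ℝ] F l)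
variable (dF : ∀ l, F l →ₗ[ℝ] F (l + 1))
variable (wedge : ∀ p q r : ℕ, p + q = r → F p → F q → F r)

/-- The horizontal (inhomogeneous group-cochain) differential
`δc(g₁,…,g_{k+1}) = c(g₂,…,g_{k+1}) + ∑ (-1)^i c(g₁,…,g_i g_{i+1},…,g_{k+1})
 + (-1)^{k+1} g_{k+1}^* c(g₁,…,g_k)`. -/
def gdel (k l : ℕ) (c : GC G F k l) : GC G F (k + 1) l := fun g =>
  c (fun i => g i.succ)
    + ∑ i : Fin k,
        ((-1 : ℝ) ^ ((i : ℕ) + 1)) •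
          c (fun j =>
              if (j : ℕ) < (i : ℕ) then g (Fin.castSucc j)
              else if (j : ℕ) = (i : ℕ) then g (Fin.castSucc j) * g j.succ
              else g j.succ)
    + ((-1 : ℝ) ^ (k + 1)) • pull l (g (Fin.last k)) (c (fun j => g (Fin.castSucc j)))

/-- The vertical differential `d'' = (-1)^k d` on `𝒜^{k,l}`. -/
def dvv (k l : ℕ) (c : GC G F k l) : GC G F k (l + 1) := fun g =>
  ((-1 : ℝ) ^ k) • dF l (c g)

/-- An element of the double complex `𝒜^{*,*}`, given by all of its bidegree components. -/
abbrev GCT (G : Type) (F : ℕ → Type) : Type := ∀ k l : ℕ, GC G F k l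

/-- The horizontal differential on the total complex. -/
def Dh (c : GCT G F) : GCT G F := fun k l =>
  match k with
  | 0 => 0
  | k + 1 => gdel pull k l (c k l)

/-- The vertical differential on the total complex. -/
def Dv (c : GCT G F) : GCT G F := fun k l =>
  match l with
  | 0 => 0
  | l + 1 => dvv dF k l (c k l)

/-- The total differential `d = δ + d''`. -/
def DT (c : GCT G F) : GCT G F := Dh pull c + Dv dF c

/-- `c` is concentrated in total degree `m`. -/
def IsDeg (m : ℕ) (c : GCT G F) : Prop := ∀ k l, k + l ≠ m → c k l = 0

/-- The wedge product
`(α∧β)(g₁,…,g_{p+r}) = (g_{p+1}⋯g_{p+r})^* α(g₁,…,g_p) ∧ β(g_{p+1},…,g_{p+r})`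
of `α ∈ 𝒜^{p,q}` and `β ∈ 𝒜^{r,s}`. -/
def cwedge {p q r s k l : ℕ} (h1 : p + r = k) (h2 : q + s = l)
    (α : GC G F p q) (β : GC G F r s) : GC G F k l := fun g =>
  wedge q s l h2
    (pull q ((List.ofFn fun i : Fin r => g (Fin.cast h1 (Fin.natAdd p i))).prod)
      (α fun i => g (Fin.cast h1 (Fin.castAdd r i))))
    (β fun i => g (Fin.cast h1 (Fin.natAdd p i)))

/-- The wedge product on the total complex. -/
def tmulC (c c' : GCT G F) : GCT G F := fun k l =>
  ∑ p ∈ (Finset.range (k + 1)).attach, ∑ q ∈ (Finset.range (l + 1)).attach,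
    cwedge pull wedge
      (Nat.add_sub_cancel' (Nat.lt_succ_iff.mp (Finset.mem_range.mp p.2)))
      (Nat.add_sub_cancel' (Nat.lt_succ_iff.mp (Finset.mem_range.mp q.2)))
      (c p.1 q.1) (c' (k - p.1) (l - q.1))

end GroupCochains

/-! ### Group cohomology with trivial real coefficients -/

section RealCochains

variable {G : Type} [Group G]

/-- The inhomogeneous group-cochain differential with trivial real coefficients. -/
def rdel (k : ℕ) (c : (Fin k → G) → ℝ) : (Fin (k + 1) → G) → ℝ := fun g =>
  c (fun i => g i.succ)
    + ∑ i : Fin k,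
        ((-1 : ℝ) ^ ((i : ℕ) + 1)) •
          c (fun j =>
              if (j : ℕ) < (i : ℕ) then g (Fin.castSucc j)
              else if (j : ℕ) = (i : ℕ) then g (Fin.castSucc j) * g j.succ
              else g j.succ)
    + ((-1 : ℝ) ^ (k + 1)) • c (fun j => g (Fin.castSucc j))

/-- `u` is a coboundary of real group cochains. -/
def IsCobdryR (k : ℕ) (u : (Fin k → G) → ℝ) : Prop :=
  ∃ (j : ℕ) (h : j + 1 = k) (w : (Fin j → G) → ℝ), u = fun g => rdel j w (g ∘ Fin.cast h)

/-- The cohomology class of the cochain `u` in `H^k(BG^δ; ℝ)` vanishes. -/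
def ClassZeroR (k : ℕ) (u : (Fin k → G) → ℝ) : Prop := u = 0 ∨ IsCobdryR k u

/-- `u` and `v` represent the same class in `H^k(BG^δ; ℝ)`. -/
def CohomologousR (k : ℕ) (u v : (Fin k → G) → ℝ) : Prop := ClassZeroR k (u - v)

end RealCochains

/-! ### Abstract geometric data for `(M, ∂M, ω, Diff_{ω,0}(M,∂M))`

`RelGeom n` records the de Rham complexes of a compact connected oriented
`n`-manifold `M` with boundary `∂M`, the restriction map `i^* : Ω^*(M) → Ω^*(∂M)`,
integration of top forms, a volume form `ω`, and a group `G` (modelling the identity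
component `Diff_{ω,0}(M,∂M)` of the group of `ω`-preserving diffeomorphisms fixing
`∂M` pointwise) acting on forms by pullback, preserving `ω`, integration and
boundary restrictions. -/

structure RelGeom (n : ℕ) where
  /-- `Ω^l(M)` -/
  Fm : ℕ → Type
  [acg : ∀ l, AddCommGroup (Fm l)]
  [mod : ∀ l, Module ℝ (Fm l)]
  /-- exterior derivative -/
  dF : ∀ l, Fm l →ₗ[ℝ] Fm (l + 1)
  dF_dF : ∀ (l) (α : Fm l), dF (l + 1) (dF l α) = 0
  /-- wedge product (indexed through a proof `p + q = r` to avoid casts) -/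
  wedge : ∀ p q r : ℕ, p + q = r → Fm p → Fm q → Fm r
  wedge_add_left : ∀ (p q r) (h : p + q = r) (α α' : Fm p) (β : Fm q),
    wedge p q r h (α + α') β = wedge p q r h α β + wedge p q r h α' β
  wedge_add_right : ∀ (p q r) (h : p + q = r) (α : Fm p) (β β' : Fm q),
    wedge p q r h α (β + β') = wedge p q r h α β + wedge p q r h α β'
  wedge_smul_left : ∀ (p q r) (h : p + q = r) (a : ℝ) (α : Fm p) (β : Fm q),
    wedge p q r h (a • α) β = a • wedge p q r h α β
  wedge_smul_right : ∀ (p q r) (h : p + q = r) (a : ℝ) (α : Fm p) (β : Fm q),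
    wedge p q r h α (a • β) = a • wedge p q r h α β
  wedge_comm : ∀ (p q r) (h : p + q = r) (h' : q + p = r) (α : Fm p) (β : Fm q),
    wedge p q r h α β = ((-1 : ℝ) ^ (p * q)) • wedge q p r h' β α
  dF_wedge : ∀ (p q r) (h : p + q = r) (hp : p + 1 + q = r + 1) (hq : p + (q + 1) = r + 1)
    (α : Fm p) (β : Fm q),
    dF r (wedge p q r h α β)
      = wedge (p + 1) q (r + 1) hp (dF p α) β
        + ((-1 : ℝ) ^ p) • wedge p (q + 1) (r + 1) hq α (dF q β)
  /-- forms of degree `> n` vanish on the `n`-manifold `M` -/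
  top : ∀ l, n < l → ∀ α : Fm l, α = 0
  /-- `Ω^l(∂M)` -/
  FmB : ℕ → Type
  [acgB : ∀ l, AddCommGroup (FmB l)]
  [modB : ∀ l, Module ℝ (FmB l)]
  dB : ∀ l, FmB l →ₗ[ℝ] FmB (l + 1)
  dB_dB : ∀ (l) (β : FmB l), dB (l + 1) (dB l β) = 0
  /-- restriction `i^*` to the boundary -/
  res : ∀ l, Fm l →ₗ[ℝ] FmB l
  res_dF : ∀ (l) (α : Fm l), res (l + 1) (dF l α) = dB l (res l α)
  /-- integration of top forms over the oriented manifold `M` -/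
  intM : Fm n →ₗ[ℝ] ℝ
  /-- integration over the boundary `∂M` -/
  intB : ∀ l, l + 1 = n → FmB l →ₗ[ℝ] ℝ
  /-- Stokes' formula -/
  stokes : ∀ (l) (h : l + 1 = n) (α : Fm l),
    intM (cast (congrArg Fm h) (dF l α)) = intB l h (res l α)
  /-- the group `Diff_{ω,0}(M, ∂M)` -/
  G : Type
  [grp : Group G]
  /-- pullback of forms along a diffeomorphism -/
  pull : ∀ l, G → Fm l →ₗ[ℝ] Fm l
  pull_one : ∀ (l) (α : Fm l), pull l 1 α = α
  pull_mul : ∀ (l) (g h : G) (α : Fm l), pull l (g * h) α = pull l h (pull l g α)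
  pull_dF : ∀ (l) (g : G) (α : Fm l), dF l (pull l g α) = pull (l + 1) g (dF l α)
  pull_wedge : ∀ (p q r) (h : p + q = r) (g : G) (α : Fm p) (β : Fm q),
    pull r g (wedge p q r h α β) = wedge p q r h (pull p g α) (pull q g β)
  /-- elements of `G` fix the boundary pointwise -/
  res_pull : ∀ (l) (g : G) (α : Fm l), res l (pull l g α) = res l α
  /-- diffeomorphisms in `G` are orientation preserving -/
  intM_pull : ∀ (g : G) (α : Fm n), intM (pull n g α) = intM α
  /-- the volume form `ω` -/
  ωM : Fm n
  /-- `G` preserves the volume form -/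
  pull_ωM : ∀ g : G, pull n g ωM = ωM
  /-- `ω` is a volume form on the oriented manifold `M`; in particular `vol(M) > 0` -/
  vol_pos : 0 < intM ωM

attribute [instance] RelGeom.acg RelGeom.mod RelGeom.acgB RelGeom.modB RelGeom.grp

namespace RelGeom

variable {n : ℕ} (D : RelGeom n)

/-- The element `ω^{(n)} ∈ 𝒜^{0,n}` of the double complex corresponding to `ω`. -/
def omC : GCT D.G D.Fm := fun k l _ =>
  if h : k = 0 ∧ l = n then cast (congrArg D.Fm h.2.symm) D.ωM else 0

/-- All components of form degree `≤ n-2` pull back to `0` on `∂M`. -/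
def RelBnd (c : GCT D.G D.Fm) : Prop :=
  ∀ k l, l + 2 ≤ n → ∀ g : Fin k → D.G, D.res l (c k l g) = 0

/-- `φ = φ^{(0)} + ⋯ + φ^{(n-1)}` is as in the definition of `c(M)`: it has total
degree `n-1`, satisfies `dφ = ω^{(n)}`, and its components of form degree `≤ n-2`
pull back to `0` on the boundary. -/
def Admissible (φ : GCT D.G D.Fm) : Prop :=
  IsDeg (n - 1) φ ∧ DT D.pull D.dF φ = D.omC ∧ D.RelBnd φ

/-- The cocycle `(g₁,…,g_{n-1}) ↦ ∫_M φ^{(0)}(g₁,…,g_{n-1}) ∧ ω` representing the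
class `c(M) ∈ H^{n-1}(B Diff_{ω,0}(M,∂M)^δ; ℝ)`. -/
def uM (φ : GCT D.G D.Fm) : (Fin (n - 1) → D.G) → ℝ := fun g =>
  D.intM (D.wedge 0 n n (Nat.zero_add n) (φ (n - 1) 0 g) D.ωM)

/-- The hypothesis `H^l(M, ∂M; ℝ) = 0` for all `0 < l < n`, in relative de Rham
formulation, together with `H^0(M, ∂M; ℝ) = 0` (which holds since `M` is connected
with nonempty boundary). -/
def RelAcyclic : Prop :=
  (∀ α : D.Fm 0, D.dF 0 α = 0 → D.res 0 α = 0 → α = 0) ∧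
    ∀ l, l + 1 < n → ∀ α : D.Fm (l + 1), D.dF (l + 1) α = 0 → D.res (l + 1) α = 0 →
      ∃ β : D.Fm l, D.res l β = 0 ∧ D.dF l β = α

end RelGeom

/-! ### Auxiliary machinery -/

section AuxCochain

variable {G : Type} [Group G] {F : ℕ → Type} [∀ l, AddCommGroup (F l)]
  [∀ l, Module ℝ (F l)] (pull : ∀ l, G → F l →ₗ[ℝ] F l)

lemma gdel_zero (k l : ℕ) : gdel pull k l (0 : GC G F k l) = 0 := by
  funext g
  simp [gdel]

lemma gdel_smul (k l : ℕ) (a : ℝ) (c : GC G F k l) :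
    gdel pull k l (a • c) = a • gdel pull k l c := by
  funext g
  simp [gdel, smul_add, Finset.smul_sum, smul_smul, mul_comm]

end AuxCochain

section AuxV

variable {G : Type} [Group G] {V : Type} [AddCommGroup V] [Module ℝ V]

/-- simplicial (alternating coface) differential on homogeneous cochains -/
def sdel (k : ℕ) (f : (Fin k → G) → V) : (Fin (k + 1) → G) → V := fun x =>
  ∑ i : Fin (k + 1), ((-1 : ℝ) ^ (i : ℕ)) • f (fun t => x (i.succAbove t))

lemma succAbove_val' {k : ℕ} (i : Fin (k + 1)) (a : Fin k) :
    ((i.succAbove a : Fin (k + 1)) : ℕ) = if (a : ℕ) < (i : ℕ) then (a : ℕ) else (a : ℕ) + 1 := by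
  rcases lt_or_ge ((a : ℕ)) (i : ℕ) with h | h
  · rw [Fin.succAbove_of_castSucc_lt _ _ (by simpa [Fin.lt_def] using h)]
    simp [h]
  · rw [Fin.succAbove_of_le_castSucc _ _ (by simpa [Fin.le_def] using h)]
    simp [Nat.not_lt.mpr h]

set_option linter.unusedSectionVars false in
lemma sdel_sdel {k : ℕ} (f : (Fin k → G) → V) : sdel (k + 1) (sdel k f) = 0 := by
  funext x
  show (∑ i : Fin (k + 2), ((-1 : ℝ) ^ (i : ℕ)) •
      ∑ j : Fin (k + 1), ((-1 : ℝ) ^ (j : ℕ)) •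
        f (fun t => x (i.succAbove (j.succAbove t)))) = (0 : V)
  simp only [Finset.smul_sum, smul_smul, ← pow_add]
  rw [← Finset.sum_product']
  show ∑ p ∈ Finset.univ ×ˢ Finset.univ, _ = (0 : V)
  set T : Fin (k + 2) × Fin (k + 1) → V := fun p =>
    ((-1 : ℝ) ^ ((p.1 : ℕ) + (p.2 : ℕ))) • f (fun t => x (p.1.succAbove (p.2.succAbove t))) with hT
  apply Finset.sum_ninvolution
    (g := fun p : Fin (k + 2) × Fin (k + 1) => if h : (p.1 : ℕ) ≤ (p.2 : ℕ)
      then ((p.2.succ : Fin (k + 2)), (⟨(p.1 : ℕ), by have := p.2.isLt; omega⟩ : Fin (k + 1)))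
      else ((p.2.castSucc : Fin (k + 2)),
        (⟨(p.1 : ℕ) - 1, by have := p.1.isLt; omega⟩ : Fin (k + 1))))
  · -- sum to zero
    rintro ⟨a, b⟩
    by_cases h : (a : ℕ) ≤ (b : ℕ)
    · rw [dif_pos h]
      have harg : (fun t => x (a.succAbove (b.succAbove t)))
          = fun t => x ((b.succ).succAbove ((⟨(a : ℕ), by have := b.isLt; omega⟩ :
              Fin (k + 1)).succAbove t)) := by
        funext t; congr 1; apply Fin.ext
        simp only [succAbove_val', Fin.val_succ]
        split_ifs <;> omega
      simp only [hT, harg, Fin.val_succ]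
      rw [← add_smul]
      have : ((-1 : ℝ) ^ ((a : ℕ) + (b : ℕ)) + (-1 : ℝ) ^ ((b : ℕ) + 1 + (a : ℕ))) = 0 := by
        have : (b : ℕ) + 1 + (a : ℕ) = ((a : ℕ) + (b : ℕ)) + 1 := by omega
        rw [this, pow_succ]; ring
      rw [this, zero_smul]
    · rw [dif_neg h]
      push_neg at h
      have harg : (fun t => x (b.castSucc.succAbove
            ((⟨(a : ℕ) - 1, by have := a.isLt; omega⟩ : Fin (k + 1)).succAbove t)))
          = fun t => x (a.succAbove (b.succAbove t)) := by
        funext t; congr 1; apply Fin.ext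
        simp only [succAbove_val', Fin.val_succ, Fin.coe_castSucc]
        split_ifs <;> omega
      simp only [hT, harg, Fin.coe_castSucc]
      rw [← add_smul]
      have : ((-1 : ℝ) ^ ((a : ℕ) + (b : ℕ)) + (-1 : ℝ) ^ ((b : ℕ) + ((a : ℕ) - 1))) = 0 := by
        have h2 : (a : ℕ) + (b : ℕ) = ((b : ℕ) + ((a : ℕ) - 1)) + 1 := by omega
        rw [h2, pow_succ]; ring
      rw [this, zero_smul]
  · rintro ⟨a, b⟩ _
    by_cases h : (a : ℕ) ≤ (b : ℕ)
    · rw [dif_pos h]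
      intro hc
      have := congrArg (fun p => (p.1 : ℕ)) hc
      simp at this; omega
    · rw [dif_neg h]
      intro hc
      have := congrArg (fun p => (p.1 : ℕ)) hc
      simp at this; omega
  · intro p; exact Finset.mem_univ _
  · rintro ⟨a, b⟩
    by_cases h : (a : ℕ) ≤ (b : ℕ)
    · rw [dif_pos h, dif_neg (by simp; omega)]
      apply Prod.ext <;> apply Fin.ext <;> simp
    · rw [dif_neg h, dif_pos (by simp; omega)]
      apply Prod.ext <;> apply Fin.ext <;> simp <;> omega

end AuxV
section AuxD

variable {n : ℕ} (D : RelGeom n)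

/-- homogenization of an inhomogeneous cochain -/
def Thom (k l : ℕ) (c : GC D.G D.Fm k l) : (Fin (k + 1) → D.G) → D.Fm l := fun x =>
  D.pull l (x (Fin.last k)) (c fun j => x j.castSucc * (x j.succ)⁻¹)

lemma Thom_gdel (k l : ℕ) (c : GC D.G D.Fm k l) :
    Thom D (k + 1) l (gdel D.pull k l c) = sdel (k + 1) (Thom D k l c) := by
  funext x
  show D.pull l (x (Fin.last (k + 1)))
      (gdel D.pull k l c (fun j : Fin (k + 1) => x j.castSucc * (x j.succ)⁻¹))
    = ∑ i : Fin (k + 2), ((-1 : ℝ) ^ (i : ℕ)) •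
        D.pull l (x (i.succAbove (Fin.last k)))
          (c fun j => x (i.succAbove j.castSucc) * (x (i.succAbove j.succ))⁻¹)
  set q : Fin (k + 1) → D.G := fun j => x j.castSucc * (x j.succ)⁻¹ with hq
  rw [Fin.sum_univ_succ, Fin.sum_univ_castSucc]
  simp only [gdel, map_add, map_smul, map_sum]
  rw [add_assoc]
  congr 1
  · -- the i = 0 term
    simp only [Fin.val_zero, pow_zero, one_smul, Fin.succAbove_zero, Fin.succ_last]
    congr 1
  congr 1
  · -- the middle sum
    apply Finset.sum_congr rfl
    intro t _
    have hv : (((t.castSucc).succ : Fin (k + 2)) : ℕ) = (t : ℕ) + 1 := by simp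
    have e0 : ((t.castSucc).succ : Fin (k + 2)).succAbove (Fin.last k) = Fin.last (k + 1) := by
      apply Fin.ext
      simp only [succAbove_val', hv, Fin.coe_castSucc, Fin.val_succ, Fin.val_last]
      have := t.isLt
      split_ifs <;> omega
    have earg : (fun j : Fin k =>
          x (((t.castSucc).succ : Fin (k + 2)).succAbove j.castSucc)
            * (x (((t.castSucc).succ : Fin (k + 2)).succAbove j.succ))⁻¹)
        = fun j : Fin k =>
            if (j : ℕ) < (t : ℕ) then q j.castSucc
            else if (j : ℕ) = (t : ℕ) then q j.castSucc * q j.succ else q j.succ := by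
      funext j
      rcases Nat.lt_trichotomy (j : ℕ) (t : ℕ) with hj | hj | hj
      · have e1 : ((t.castSucc).succ : Fin (k + 2)).succAbove j.castSucc
            = j.castSucc.castSucc := by
          apply Fin.ext
          simp only [succAbove_val', hv, Fin.coe_castSucc, Fin.val_succ, Fin.val_last]
          split_ifs <;> omega
        have e2 : ((t.castSucc).succ : Fin (k + 2)).succAbove j.succ = j.succ.castSucc := by
          apply Fin.ext
          simp only [succAbove_val', hv, Fin.coe_castSucc, Fin.val_succ, Fin.val_last]
          split_ifs <;> omega
        rw [e1, e2, if_pos hj]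
        simp only [hq, Fin.succ_castSucc]
      · have e1 : ((t.castSucc).succ : Fin (k + 2)).succAbove j.castSucc
            = j.castSucc.castSucc := by
          apply Fin.ext
          simp only [succAbove_val', hv, Fin.coe_castSucc, Fin.val_succ, Fin.val_last]
          split_ifs <;> omega
        have e2 : ((t.castSucc).succ : Fin (k + 2)).succAbove j.succ = j.succ.succ := by
          apply Fin.ext
          simp only [succAbove_val', hv, Fin.coe_castSucc, Fin.val_succ, Fin.val_last]
          split_ifs <;> omega
        rw [e1, e2, if_neg (by omega), if_pos hj]
        simp only [hq, Fin.succ_castSucc, mul_assoc, inv_mul_cancel_left]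
      · have e1 : ((t.castSucc).succ : Fin (k + 2)).succAbove j.castSucc
            = j.castSucc.succ := by
          apply Fin.ext
          simp only [succAbove_val', hv, Fin.coe_castSucc, Fin.val_succ, Fin.val_last]
          split_ifs <;> omega
        have e2 : ((t.castSucc).succ : Fin (k + 2)).succAbove j.succ = j.succ.succ := by
          apply Fin.ext
          simp only [succAbove_val', hv, Fin.coe_castSucc, Fin.val_succ, Fin.val_last]
          split_ifs <;> omega
        rw [e1, e2, if_neg (by omega), if_neg (by omega)]
        simp only [hq, Fin.succ_castSucc]
    rw [e0, earg, hv]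
  · -- the last term
    rw [Fin.succ_last, Fin.succAbove_last]
    simp only [Fin.val_last]
    rw [← D.pull_mul]
    have hg : q (Fin.last k) * x (Fin.last (k + 1)) = x ((Fin.last k).castSucc) := by
      simp only [hq, Fin.succ_last]
      simp [mul_assoc]
    rw [hg]
    congr 2

/-- the canonical section used to invert `Thom` -/
def sect {k : ℕ} (g : Fin k → D.G) : Fin (k + 1) → D.G := fun j =>
  ((List.ofFn g).drop j).prod

lemma Thom_sect (k l : ℕ) (c : GC D.G D.Fm k l) (g : Fin k → D.G) :
    Thom D k l c (sect D g) = c g := by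
  have hlast : sect D g (Fin.last k) = 1 := by
    show ((List.ofFn g).drop k).prod = 1
    rw [List.drop_eq_nil_of_le (by simp), List.prod_nil]
  have harg : (fun j : Fin k => sect D g j.castSucc * (sect D g j.succ)⁻¹) = g := by
    funext j
    show ((List.ofFn g).drop (j : ℕ)).prod * (((List.ofFn g).drop ((j : ℕ) + 1)).prod)⁻¹ = g j
    rw [List.drop_eq_getElem_cons (by simp [j.isLt]), List.prod_cons]
    simp [mul_assoc, List.getElem_ofFn]
  rw [Thom, harg, hlast, D.pull_one]

lemma gdel_gdel (k l : ℕ) (c : GC D.G D.Fm k l) :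
    gdel D.pull (k + 1) l (gdel D.pull k l c) = 0 := by
  funext g
  have h0 : Thom D (k + 2) l (gdel D.pull (k + 1) l (gdel D.pull k l c)) = 0 := by
    rw [Thom_gdel, Thom_gdel, sdel_sdel]
  calc gdel D.pull (k + 1) l (gdel D.pull k l c) g
      = Thom D (k + 2) l (gdel D.pull (k + 1) l (gdel D.pull k l c)) (sect D g) :=
        (Thom_sect D _ _ _ g).symm
    _ = 0 := by rw [h0]; rfl

lemma dF_gdel (k l : ℕ) (c : GC D.G D.Fm k l) (g : Fin (k + 1) → D.G) :
    D.dF l (gdel D.pull k l c g) = gdel D.pull k (l + 1) (fun h => D.dF l (c h)) g := by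
  simp [gdel, map_add, map_sum, map_smul, D.pull_dF]

lemma res_gdel_zero (k l : ℕ) (c : GC D.G D.Fm k l) (hc : ∀ h, D.res l (c h) = 0)
    (g : Fin (k + 1) → D.G) : D.res l (gdel D.pull k l c g) = 0 := by
  simp [gdel, map_add, map_sum, map_smul, D.res_pull, hc]

lemma res_gdel_k0 (l : ℕ) (c : GC D.G D.Fm 0 l) (g : Fin 1 → D.G) :
    D.res l (gdel D.pull 0 l c g) = 0 := by
  have he : (fun i : Fin 0 => g i.succ) = (fun j : Fin 0 => g j.castSucc) := by
    funext i; exact i.elim0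
  simp [gdel, D.res_pull, he]

end AuxD
section AuxSeq

variable {m : ℕ} (D : RelGeom (m + 1))

lemma cast_smul' {a b : ℕ} (h : a = b) (r : ℝ) (x : D.Fm a) :
    cast (congrArg D.Fm h) (r • x) = r • cast (congrArg D.Fm h) x := by subst h; rfl

lemma cast_zero' {a b : ℕ} (h : a = b) : cast (congrArg D.Fm h) (0 : D.Fm a) = 0 := by
  subst h; rfl

lemma res_cast' {a b : ℕ} (h : a = b) (x : D.Fm a) :
    D.res b (cast (congrArg D.Fm h) x) = cast (congrArg D.FmB h) (D.res a x) := by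
  subst h; rfl

lemma gdel_cast' {a b : ℕ} (h : a = b) (k : ℕ) (c : GC D.G D.Fm k a) (g : Fin (k + 1) → D.G) :
    gdel D.pull k b (fun g' => cast (congrArg D.Fm h) (c g')) g
      = cast (congrArg D.Fm h) (gdel D.pull k a c g) := by
  subst h; rfl

/-- invariant carried along the zig-zag construction -/
def InvP (i : ℕ) (c : GC D.G D.Fm i (m - i)) : Prop :=
  (∀ g, D.dF (m - i) (gdel D.pull i (m - i) c g) = 0) ∧
  (∀ g, D.res (m - i) (gdel D.pull i (m - i) c g) = 0) ∧
  (i ≠ 0 → ∀ g, D.res (m - i) (c g) = 0)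

lemma solve_rel (hacy : D.RelAcyclic) {a b : ℕ} (h : a + 1 = b) (hb : a + 1 ≤ m)
    (x : D.Fm b) (hd : D.dF b x = 0) (hr : D.res b x = 0) :
    ∃ β : D.Fm a, D.res a β = 0 ∧ cast (congrArg D.Fm h) (D.dF a β) = x := by
  subst h
  obtain ⟨β, h1, h2⟩ := hacy.2 a (by omega) x hd hr
  exact ⟨β, h1, by rw [cast_eq]; exact h2⟩

lemma seq_ex (hacy : D.RelAcyclic) (i : ℕ) (him : i < m) (c : GC D.G D.Fm i (m - i))
    (hc : InvP D i c) :
    ∃ c' : GC D.G D.Fm (i + 1) (m - (i + 1)),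
      (∀ g, D.res (m - (i + 1)) (c' g) = 0) ∧
      (∀ g, cast (congrArg D.Fm (show m - (i + 1) + 1 = m - i by omega))
            (D.dF (m - (i + 1)) (c' g))
          = ((-1 : ℝ) ^ i) • gdel D.pull i (m - i) c g) := by
  have H : ∀ g : Fin (i + 1) → D.G, ∃ β : D.Fm (m - (i + 1)),
      D.res (m - (i + 1)) β = 0 ∧
      cast (congrArg D.Fm (show m - (i + 1) + 1 = m - i by omega)) (D.dF (m - (i + 1)) β)
        = ((-1 : ℝ) ^ i) • gdel D.pull i (m - i) c g := by
    intro g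
    apply solve_rel D hacy (show m - (i + 1) + 1 = m - i by omega) (by omega)
    · rw [map_smul, hc.1 g, smul_zero]
    · rw [map_smul, hc.2.1 g, smul_zero]
  choose c' h1 h2 using H
  exact ⟨c', h1, h2⟩

/-- the zig-zag sequence of cochains: `seqC i ∈ 𝒜^{i, m-i}` -/
noncomputable def seqC (hacy : D.RelAcyclic) (β : D.Fm m) (hβ : D.dF m β = D.ωM) :
    (i : ℕ) → {c : GC D.G D.Fm i (m - i) // InvP D i c}
  | 0 => ⟨fun _ => β, by
      refine ⟨?_, ?_, fun h => absurd rfl h⟩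
      · intro g
        simp [gdel, hβ, D.pull_dF, D.pull_ωM]
      · intro g
        exact res_gdel_k0 D m (fun _ => β) g⟩
  | (i + 1) =>
      if him : i < m then
        ⟨Classical.choose (seq_ex D hacy i him (seqC hacy β hβ i).1 (seqC hacy β hβ i).2), by
          obtain ⟨h1, h2⟩ :=
            Classical.choose_spec (seq_ex D hacy i him (seqC hacy β hβ i).1 (seqC hacy β hβ i).2)
          set c' := Classical.choose
            (seq_ex D hacy i him (seqC hacy β hβ i).1 (seqC hacy β hβ i).2) with hc'
          have hab : m - (i + 1) + 1 = m - i := by omega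
          refine ⟨?_, ?_, fun _ => h1⟩
          · intro g
            rw [dF_gdel]
            have h2' : (fun g' => D.dF (m - (i + 1)) (c' g'))
                = fun g' => cast (congrArg D.Fm hab.symm)
                    ((((-1 : ℝ) ^ i) • gdel D.pull i (m - i) (seqC hacy β hβ i).1) g') := by
              funext g'
              rw [Pi.smul_apply, ← h2 g', cast_cast, cast_eq]
            rw [h2', gdel_cast' D hab.symm (i + 1)
              (((-1 : ℝ) ^ i) • gdel D.pull i (m - i) (seqC hacy β hβ i).1) g]
            rw [gdel_smul, gdel_gdel]
            rw [smul_zero]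
            exact cast_zero' D hab.symm
          · intro g
            exact res_gdel_zero D (i + 1) (m - (i + 1)) c' h1 g⟩
      else ⟨0, by
        refine ⟨?_, ?_, fun _ g => map_zero _⟩ <;> intro g <;>
          rw [gdel_zero] <;> exact map_zero _⟩

lemma seqC_succ_spec (hacy : D.RelAcyclic) (β : D.Fm m) (hβ : D.dF m β = D.ωM)
    (i : ℕ) (him : i < m) (g : Fin (i + 1) → D.G) :
    cast (congrArg D.Fm (show m - (i + 1) + 1 = m - i by omega))
        (D.dF (m - (i + 1)) ((seqC D hacy β hβ (i + 1)).1 g))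
      = ((-1 : ℝ) ^ i) • gdel D.pull i (m - i) ((seqC D hacy β hβ i).1) g := by
  have : (seqC D hacy β hβ (i + 1)).1
      = Classical.choose (seq_ex D hacy i him (seqC D hacy β hβ i).1 (seqC D hacy β hβ i).2) := by
    simp only [seqC]
    rw [dif_pos him]
  rw [this]
  exact (Classical.choose_spec
    (seq_ex D hacy i him (seqC D hacy β hβ i).1 (seqC D hacy β hβ i).2)).2 g

end AuxSeq
/-! ### STATEMENT 5

Let `M` be a compact connected orientable `n`-dimensional `C^∞` manifold with a
volume form `ω` such that `H^l(M,∂M;ℝ) = 0` for all `0 < l < n`.  Then there exists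
`φ = φ^{(0)} + ⋯ + φ^{(n-1)}` with `φ^{(l)} ∈ 𝒜^{n-1-l,l}` such that `dφ = ω^{(n)}`
(zig-zag: `d''φ^{(n-1)} = ω` and `δφ^{(l)} + d''φ^{(l-1)} = 0`), and every component
`φ^{(l)}(g₁,…,g_{n-1-l})` with `l ≤ n-2` pulls back to `0` on `∂M`.
Moreover, for any such `φ` one has `δφ^{(0)} = 0`. -/

theorem exists_admissible_phi (n : ℕ) (hn : 1 ≤ n) (D : RelGeom n)
    (hacyclic : D.RelAcyclic)
    (hexact : ∃ β : D.Fm (n - 1),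
      cast (congrArg D.Fm (show n - 1 + 1 = n by omega)) (D.dF (n - 1) β) = D.ωM) :
    (∃ φ : GCT D.G D.Fm,
        IsDeg (n - 1) φ ∧
        (∀ k l, 1 ≤ l → DT D.pull D.dF φ k l = D.omC k l) ∧
        D.RelBnd φ) ∧
    (∀ φ : GCT D.G D.Fm,
        IsDeg (n - 1) φ →
        (∀ k l, 1 ≤ l → DT D.pull D.dF φ k l = D.omC k l) →
        D.RelBnd φ →
        Dh D.pull φ n 0 = 0) := by
  obtain ⟨m, rfl⟩ : ∃ m, n = m + 1 := ⟨n - 1, by omega⟩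
  constructor
  · -- existence of φ
    obtain ⟨β, hβc⟩ := hexact
    have hβ : D.dF m β = D.ωM := by
      rw [← hβc]; symm; exact cast_eq _ _
    refine ⟨fun k l => if h : k + l = m then
        (fun g => cast (congrArg D.Fm (show m - k = l by omega))
          ((seqC D hacyclic β hβ k).1 g))
      else 0, ?_, ?_, ?_⟩
    · -- IsDeg
      intro k l hkl
      exact dif_neg (by omega)
    · -- DT = omC in form degrees ≥ 1
      intro k l hl
      obtain ⟨l', rfl⟩ : ∃ l', l = l' + 1 := ⟨l - 1, by omega⟩
      show (Dh D.pull _ k (l' + 1)) + (Dv D.dF _ k (l' + 1)) = D.omC k (l' + 1)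
      match k with
      | 0 =>
        show (0 : GC D.G D.Fm 0 (l' + 1)) + dvv D.dF 0 l' _ = D.omC 0 (l' + 1)
        rw [zero_add]
        by_cases hl' : l' = m
        · subst hl'
          funext g
          show ((-1 : ℝ) ^ 0) • D.dF l'
              ((if h : 0 + l' = l' then
                  (fun g => cast (congrArg D.Fm (show l' - 0 = l' by omega))
                    ((seqC D hacyclic β hβ 0).1 g))
                else 0) g) = D.omC 0 (l' + 1) g
          rw [dif_pos (Nat.zero_add l')]
          show ((-1 : ℝ) ^ 0) • D.dF l'
              (cast (congrArg D.Fm (show l' - 0 = l' by omega)) ((seqC D hacyclic β hβ 0).1 g))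
            = D.omC 0 (l' + 1) g
          rw [cast_eq]
          have h0 : (seqC D hacyclic β hβ 0).1 g = β := by simp [seqC]
          rw [h0, pow_zero, one_smul, hβ]
          show D.ωM = D.omC 0 (l' + 1) g
          rw [RelGeom.omC, dif_pos ⟨rfl, rfl⟩]
          symm; exact cast_eq _ _
        · funext g
          show ((-1 : ℝ) ^ 0) • D.dF l'
              ((if h : 0 + l' = m then
                  (fun g => cast (congrArg D.Fm (show m - 0 = l' by omega))
                    ((seqC D hacyclic β hβ 0).1 g))
                else 0) g) = D.omC 0 (l' + 1) g
          rw [dif_neg (by omega)]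
          show ((-1 : ℝ) ^ 0) • D.dF l' 0 = D.omC 0 (l' + 1) g
          rw [map_zero, smul_zero, RelGeom.omC, dif_neg (by omega)]
      | (i + 1) =>
        by_cases hd : i + (l' + 1) = m
        · have him : i < m := by omega
          have hl'e : l' = m - (i + 1) := by omega
          subst hl'e
          have hmi : m - i = m - (i + 1) + 1 := by omega
          funext g
          show gdel D.pull i (m - (i + 1) + 1)
              ((if h : i + (m - (i + 1) + 1) = m then
                  (fun g => cast (congrArg D.Fm hmi)
                    ((seqC D hacyclic β hβ i).1 g))
                else 0)) g
            + ((-1 : ℝ) ^ (i + 1)) • D.dF (m - (i + 1))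
              ((if h : (i + 1) + (m - (i + 1)) = m then
                  (fun g => cast (congrArg D.Fm (show m - (i + 1) = m - (i + 1) by omega))
                    ((seqC D hacyclic β hβ (i + 1)).1 g))
                else 0) g)
            = D.omC (i + 1) (m - (i + 1) + 1) g
          rw [dif_pos (by omega : i + (m - (i + 1) + 1) = m),
            dif_pos (by omega : (i + 1) + (m - (i + 1)) = m)]
          show gdel D.pull i (m - (i + 1) + 1)
              (fun g => cast (congrArg D.Fm hmi)
                ((seqC D hacyclic β hβ i).1 g)) g
            + ((-1 : ℝ) ^ (i + 1)) • D.dF (m - (i + 1))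
              (cast (congrArg D.Fm (show m - (i + 1) = m - (i + 1) by omega))
                ((seqC D hacyclic β hβ (i + 1)).1 g))
            = D.omC (i + 1) (m - (i + 1) + 1) g
          rw [cast_eq, gdel_cast' D hmi i (seqC D hacyclic β hβ i).1 g]
          have hspec := seqC_succ_spec D hacyclic β hβ i him g
          have hdf : D.dF (m - (i + 1)) ((seqC D hacyclic β hβ (i + 1)).1 g)
              = cast (congrArg D.Fm hmi)
                  (((-1 : ℝ) ^ i) • gdel D.pull i (m - i) ((seqC D hacyclic β hβ i).1) g) := by
            rw [← hspec, cast_cast, cast_eq]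
          rw [hdf, cast_smul' D hmi, smul_smul]
          have hsgn : ((-1 : ℝ) ^ (i + 1)) * ((-1 : ℝ) ^ i) = -1 := by
            rw [pow_succ, mul_comm ((-1 : ℝ) ^ i) (-1), mul_assoc, ← pow_add, ← two_mul,
              pow_mul, neg_one_sq, one_pow, mul_one]
          rw [hsgn, neg_one_smul, add_neg_cancel, RelGeom.omC, dif_neg (by simp)]
        · funext g
          show gdel D.pull i (l' + 1)
              ((if h : i + (l' + 1) = m then
                  (fun g => cast (congrArg D.Fm (show m - i = l' + 1 by omega))
                    ((seqC D hacyclic β hβ i).1 g))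
                else 0)) g
            + ((-1 : ℝ) ^ (i + 1)) • D.dF l'
              ((if h : (i + 1) + l' = m then
                  (fun g => cast (congrArg D.Fm (show m - (i + 1) = l' by omega))
                    ((seqC D hacyclic β hβ (i + 1)).1 g))
                else 0) g)
            = D.omC (i + 1) (l' + 1) g
          rw [dif_neg hd, dif_neg (by omega), gdel_zero]
          show (0 : GC D.G D.Fm (i + 1) (l' + 1)) g + ((-1 : ℝ) ^ (i + 1)) • D.dF l' 0
            = D.omC (i + 1) (l' + 1) g
          rw [map_zero, smul_zero, RelGeom.omC, dif_neg (by simp)]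
          show (0 : D.Fm (l' + 1)) + 0 = 0
          rw [add_zero]
    · -- RelBnd
      intro k l hl2 g
      by_cases hkl : k + l = m
      · show D.res l ((if h : k + l = m then
            (fun g => cast (congrArg D.Fm (show m - k = l by omega))
              ((seqC D hacyclic β hβ k).1 g))
          else 0) g) = 0
        rw [dif_pos hkl]
        show D.res l (cast (congrArg D.Fm (show m - k = l by omega))
          ((seqC D hacyclic β hβ k).1 g)) = 0
        rw [res_cast' D (show m - k = l by omega)]
        have hres := (seqC D hacyclic β hβ k).2.2.2 (by omega) g
        rw [hres]
        have : ∀ {a b : ℕ} (h : a = b), cast (congrArg D.FmB h) (0 : D.FmB a) = 0 := by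
          intro a b h; subst h; rfl
        exact this (by omega)
      · show D.res l ((if h : k + l = m then
            (fun g => cast (congrArg D.Fm (show m - k = l by omega))
              ((seqC D hacyclic β hβ k).1 g))
          else 0) g) = 0
        rw [dif_neg hkl]
        exact map_zero _
  · -- δφ⁽⁰⁾ = 0 for any admissible φ
    intro φ hdeg hDT hbnd
    funext g
    show gdel D.pull m 0 (φ m 0) g = 0
    apply hacyclic.1
    · -- closedness
      rw [dF_gdel]
      cases m with
      | zero =>
        have hc : ∀ h : Fin 0 → D.G, D.dF 0 (φ 0 0 h) = D.ωM := by
          intro h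
          have h1 := congrFun (hDT 0 1 le_rfl) h
          have h2 : D.omC 0 1 h = D.ωM := by
            rw [RelGeom.omC, dif_pos ⟨rfl, rfl⟩]
            exact cast_eq _ _
          rw [h2] at h1
          have h3 : (0 : D.Fm 1) + ((-1 : ℝ) ^ 0) • D.dF 0 (φ 0 0 h) = D.ωM := h1
          simpa using h3
        simp only [gdel, hc]
        have hp : ∀ y, D.pull 1 y D.ωM = D.ωM := fun y => D.pull_ωM y
        simp [hp]
      | succ i =>
        have heq : ∀ g' : Fin (i + 1) → D.G,
            gdel D.pull i 1 (φ i 1) g' + ((-1 : ℝ) ^ (i + 1)) • D.dF 0 (φ (i + 1) 0 g') = 0 := by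
          intro g'
          have h1 := congrFun (hDT (i + 1) 1 le_rfl) g'
          have h2 : D.omC (i + 1) 1 g' = 0 := by
            rw [RelGeom.omC, dif_neg (by simp)]
          rw [h2] at h1
          exact h1
        have hdF : (fun g' => D.dF 0 (φ (i + 1) 0 g'))
            = ((-1 : ℝ) ^ i) • gdel D.pull i 1 (φ i 1) := by
          funext g'
          have h3 : ((-1 : ℝ) ^ (i + 1)) • D.dF 0 (φ (i + 1) 0 g')
              = - gdel D.pull i 1 (φ i 1) g' := by
            exact eq_neg_of_add_eq_zero_right (heq g')
          have hr1 : ((-1 : ℝ) ^ (i + 1)) * ((-1 : ℝ) ^ (i + 1)) = 1 := by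
            rw [← pow_add, ← two_mul, pow_mul, neg_one_sq, one_pow]
          calc D.dF 0 (φ (i + 1) 0 g')
              = (((-1 : ℝ) ^ (i + 1)) * ((-1 : ℝ) ^ (i + 1))) • D.dF 0 (φ (i + 1) 0 g') := by
                rw [hr1, one_smul]
            _ = ((-1 : ℝ) ^ (i + 1)) • (((-1 : ℝ) ^ (i + 1)) • D.dF 0 (φ (i + 1) 0 g')) := by
                rw [smul_smul]
            _ = ((-1 : ℝ) ^ (i + 1)) • (- gdel D.pull i 1 (φ i 1) g') := by rw [h3]
            _ = (((-1 : ℝ) ^ i) • gdel D.pull i 1 (φ i 1)) g' := by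
                rw [Pi.smul_apply, smul_neg, ← neg_smul]
                congr 1
                rw [pow_succ]; ring
        rw [hdF, gdel_smul, gdel_gdel, smul_zero]
        rfl
    · -- boundary restriction
      cases m with
      | zero => exact res_gdel_k0 D 0 (φ 0 0) g
      | succ i =>
        exact res_gdel_zero D (i + 1) 0 (φ (i + 1) 0) (hbnd (i + 1) 0 (by omega)) g

end TsuboiEuler
end

section
/- Let M be as above with ∂M ≅ S^{n-1}, and let φ̄ = φ̄^{(0)}+⋯+φ̄^{(n−1)} satisfy conditions (1)–(3) of Lemma 5.1. Then there exists a unique closed n-form χ ∈ 𝒜^n(B Diff₀(∂M)^δ_•), i.e. a unique n-cocycle χ: Diff₀(∂M)^n → ℝ of group cohomology with trivial real coefficients, such that r^*χ = δφ̄^{(0)}, where r^* is precomposition with the boundary-restriction homomorphism in each variable. Explicitly, χ(γ₁,…,γₙ) is the constant value of δφ̄^{(0)}(g₁,…,gₙ) for any g_k ∈ Diff_{ω,0}(M) with g_k|_{∂M} = γ_k. -/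
namespace TsuboiEuler

/-! ### Abstract geometric data for `(M, ∂M ≅ S^{n-1}, ω)` together with the groups
`Diff_{ω,0}(M)`, `Diff₀(∂M)` and `Diff_{ω,0}(M,∂M)`.

`FullGeom n` records the de Rham complexes of a compact connected oriented
`n`-manifold `M` with boundary `∂M`, the restriction `i^* : Ω^*(M) → Ω^*(∂M)`,
integration, a volume form `ω`, the group `GM` (modelling `Diff_{ω,0}(M)`), the
group `Gb` (modelling `Diff₀(∂M)`), the boundary-restriction homomorphism
`r : GM → Gb` (which is surjective: every boundary diffeomorphism extends), and the
subgroup `Grel ≤ GM` (modelling `Diff_{ω,0}(M,∂M)`), contained in the kernel of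
`r`. -/

structure FullGeom (n : ℕ) where
  /-- `Ω^l(M)` -/
  Fm : ℕ → Type
  [acg : ∀ l, AddCommGroup (Fm l)]
  [mod : ∀ l, Module ℝ (Fm l)]
  /-- exterior derivative -/
  dF : ∀ l, Fm l →ₗ[ℝ] Fm (l + 1)
  dF_dF : ∀ (l) (α : Fm l), dF (l + 1) (dF l α) = 0
  /-- wedge product -/
  wedge : ∀ p q r : ℕ, p + q = r → Fm p → Fm q → Fm r
  wedge_add_left : ∀ (p q r) (h : p + q = r) (α α' : Fm p) (β : Fm q),
    wedge p q r h (α + α') β = wedge p q r h α β + wedge p q r h α' β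
  wedge_add_right : ∀ (p q r) (h : p + q = r) (α : Fm p) (β β' : Fm q),
    wedge p q r h α (β + β') = wedge p q r h α β + wedge p q r h α β'
  wedge_smul_left : ∀ (p q r) (h : p + q = r) (a : ℝ) (α : Fm p) (β : Fm q),
    wedge p q r h (a • α) β = a • wedge p q r h α β
  wedge_smul_right : ∀ (p q r) (h : p + q = r) (a : ℝ) (α : Fm p) (β : Fm q),
    wedge p q r h α (a • β) = a • wedge p q r h α β
  wedge_comm : ∀ (p q r) (h : p + q = r) (h' : q + p = r) (α : Fm p) (β : Fm q),
    wedge p q r h α β = ((-1 : ℝ) ^ (p * q)) • wedge q p r h' β α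
  dF_wedge : ∀ (p q r) (h : p + q = r) (hp : p + 1 + q = r + 1) (hq : p + (q + 1) = r + 1)
    (α : Fm p) (β : Fm q),
    dF r (wedge p q r h α β)
      = wedge (p + 1) q (r + 1) hp (dF p α) β
        + ((-1 : ℝ) ^ p) • wedge p (q + 1) (r + 1) hq α (dF q β)
  /-- forms of degree `> n` vanish -/
  top : ∀ l, n < l → ∀ α : Fm l, α = 0
  /-- the constant function `1 ∈ Ω^0(M)` -/
  oneF : Fm 0
  dF_oneF : dF 0 oneF = 0
  oneF_wedge : ∀ (q) (α : Fm q), wedge 0 q q (Nat.zero_add q) oneF α = α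
  /-- `M` is connected: closed `0`-forms are constants -/
  connM : ∀ α : Fm 0, dF 0 α = 0 → ∃ a : ℝ, α = a • oneF
  /-- `Ω^l(∂M)` -/
  FmB : ℕ → Type
  [acgB : ∀ l, AddCommGroup (FmB l)]
  [modB : ∀ l, Module ℝ (FmB l)]
  dB : ∀ l, FmB l →ₗ[ℝ] FmB (l + 1)
  dB_dB : ∀ (l) (β : FmB l), dB (l + 1) (dB l β) = 0
  /-- restriction `i^*` to the boundary -/
  res : ∀ l, Fm l →ₗ[ℝ] FmB l
  res_dF : ∀ (l) (α : Fm l), res (l + 1) (dF l α) = dB l (res l α)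
  /-- the constant function `1 ∈ Ω^0(∂M)` -/
  oneB : FmB 0
  res_oneF : res 0 oneF = oneB
  /-- `∂M` is connected -/
  connB : ∀ β : FmB 0, dB 0 β = 0 → ∃ a : ℝ, β = a • oneB
  /-- integration of top forms over `M` -/
  intM : Fm n →ₗ[ℝ] ℝ
  /-- integration over the boundary sphere -/
  intB : ∀ l, l + 1 = n → FmB l →ₗ[ℝ] ℝ
  /-- Stokes' formula -/
  stokes : ∀ (l) (h : l + 1 = n) (α : Fm l),
    intM (cast (congrArg Fm h) (dF l α)) = intB l h (res l α)
  /-- the group `Diff_{ω,0}(M)` of volume-preserving diffeomorphisms of `M` -/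
  GM : Type
  [grpM : Group GM]
  pull : ∀ l, GM → Fm l →ₗ[ℝ] Fm l
  pull_one : ∀ (l) (α : Fm l), pull l 1 α = α
  pull_mul : ∀ (l) (g h : GM) (α : Fm l), pull l (g * h) α = pull l h (pull l g α)
  pull_dF : ∀ (l) (g : GM) (α : Fm l), dF l (pull l g α) = pull (l + 1) g (dF l α)
  pull_wedge : ∀ (p q r) (h : p + q = r) (g : GM) (α : Fm p) (β : Fm q),
    pull r g (wedge p q r h α β) = wedge p q r h (pull p g α) (pull q g β)
  pull_oneF : ∀ g : GM, pull 0 g oneF = oneF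
  intM_pull : ∀ (g : GM) (α : Fm n), intM (pull n g α) = intM α
  /-- the group `Diff₀(∂M)` of orientation-preserving diffeomorphisms of `∂M ≅ S^{n-1}` -/
  Gb : Type
  [grpB : Group Gb]
  pullB : ∀ l, Gb → FmB l →ₗ[ℝ] FmB l
  pullB_one : ∀ (l) (β : FmB l), pullB l 1 β = β
  pullB_mul : ∀ (l) (γ γ' : Gb) (β : FmB l), pullB l (γ * γ') β = pullB l γ' (pullB l γ β)
  pullB_dB : ∀ (l) (γ : Gb) (β : FmB l), dB l (pullB l γ β) = pullB (l + 1) γ (dB l β)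
  pullB_oneB : ∀ γ : Gb, pullB 0 γ oneB = oneB
  intB_pullB : ∀ (l) (h : l + 1 = n) (γ : Gb) (β : FmB l),
    intB l h (pullB l γ β) = intB l h β
  /-- restriction of diffeomorphisms to the boundary -/
  rHom : GM →* Gb
  /-- every orientation-preserving diffeomorphism of `∂M` extends to `M` -/
  rHom_surj : Function.Surjective rHom
  res_pull : ∀ (l) (g : GM) (α : Fm l), res l (pull l g α) = pullB l (rHom g) (res l α)
  /-- the subgroup `Diff_{ω,0}(M,∂M)` of diffeomorphisms fixing `∂M` pointwise -/
  Grel : Subgroup GM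
  rHom_Grel : ∀ g ∈ Grel, rHom g = 1
  /-- the volume form `ω` -/
  ωM : Fm n
  pull_ωM : ∀ g : GM, pull n g ωM = ωM
  vol_pos : 0 < intM ωM

attribute [instance] FullGeom.acg FullGeom.mod FullGeom.acgB FullGeom.modB
  FullGeom.grpM FullGeom.grpB

namespace FullGeom

variable {n : ℕ} (D : FullGeom n)

/-- The action of the subgroup `Diff_{ω,0}(M,∂M)` on forms. -/
def pullRel : ∀ l, D.Grel → D.Fm l →ₗ[ℝ] D.Fm l := fun l g => D.pull l (g : D.GM)

/-- `ω^{(n)}` as an element of the double complex of `Diff_{ω,0}(M)`-cochains. -/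
def omCM : GCT D.GM D.Fm := fun k l _ =>
  if h : k = 0 ∧ l = n then cast (congrArg D.Fm h.2.symm) D.ωM else 0

/-- `ω^{(n)}` as an element of the double complex of `Diff_{ω,0}(M,∂M)`-cochains. -/
def omCRel : GCT D.Grel D.Fm := fun k l _ =>
  if h : k = 0 ∧ l = n then cast (congrArg D.Fm h.2.symm) D.ωM else 0

/-- `φ` is as in the definition of `c(M)`: total degree `n-1`, `dφ = ω^{(n)}`, and
components of form degree `≤ n-2` pull back to `0` on `∂M`. -/
def AdmissibleRel (φ : GCT D.Grel D.Fm) : Prop :=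
  IsDeg (n - 1) φ ∧ DT D.pullRel D.dF φ = D.omCRel ∧
    ∀ k l, l + 2 ≤ n → ∀ g : Fin k → D.Grel, D.res l (φ k l g) = 0

/-- The cocycle `(g₁,…,g_{n-1}) ↦ ∫_M φ^{(0)}(g₁,…,g_{n-1}) ∧ ω` representing
`c(M)`. -/
def uRel (φ : GCT D.Grel D.Fm) : (Fin (n - 1) → D.Grel) → ℝ := fun g =>
  D.intM (D.wedge 0 n n (Nat.zero_add n) (φ (n - 1) 0 g) D.ωM)

/-- Conditions (1)–(3) of Lemma 5.1 on `φ̄ ∈ 𝒜^{n-1}(M Diff_{ω,0}(M)^δ_•)`: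
(1) `dφ̄ = ω̄^{(n)} + δφ̄^{(0)}`;
(2) `φ̄^{(l)}(g₁,…,g_{n-l-1})` pulls back to `0` on `∂M` for `l < n-1` whenever all
`gᵢ ∈ Diff_{ω,0}(M,∂M)`;
(3) for `l < n-1`, `i^* φ̄^{(l)}(g₁,…,g_{n-l-1})` only depends on the restrictions
`gᵢ|_{∂M}`. -/
def BarPhi (φb : GCT D.GM D.Fm) : Prop :=
  IsDeg (n - 1) φb ∧
  DT D.pull D.dF φb
      = D.omCM + (fun k l => if k = n ∧ l = 0 then Dh D.pull φb k l else 0) ∧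
  (∀ k l, l + 2 ≤ n → ∀ g : Fin k → D.GM, (∀ i, g i ∈ D.Grel) →
      D.res l (φb k l g) = 0) ∧
  (∀ k l, l + 2 ≤ n → ∀ g h : Fin k → D.GM, (∀ i, D.rHom (g i) = D.rHom (h i)) →
      D.res l (φb k l g) = D.res l (φb k l h))

/-- The cochain `u = ∫_M φ̄^{(0)} ∧ ω̄^{(n)}` on `Diff_{ω,0}(M)`. -/
def uBar (φb : GCT D.GM D.Fm) : (Fin (n - 1) → D.GM) → ℝ := fun g =>
  D.intM (D.wedge 0 n n (Nat.zero_add n) (φb (n - 1) 0 g) D.ωM)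

/-- `χ` is the `n`-cochain of `Diff₀(∂M)` with `r^*χ = δφ̄^{(0)}`; here
`δφ̄^{(0)}(g₁,…,g_n)` is a constant function on `M` and `r^*χ = δφ̄^{(0)}` means
that this constant equals `χ(g₁|_{∂M},…,g_n|_{∂M})`. -/
def IsChi (φb : GCT D.GM D.Fm) (χ : (Fin n → D.Gb) → ℝ) : Prop :=
  ∀ g : Fin n → D.GM, Dh D.pull φb n 0 g = χ (fun i => D.rHom (g i)) • D.oneF

/-- A zig-zag `ψ̄ = ψ̄^{(0)} + ⋯ + ψ̄^{(n-1)}` in the double complex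
`𝒜^{*,*}(S^{n-1} Diff₀(S^{n-1})^δ_•)` starting from a closed `(n-1)`-form
`ψ̄^{(n-1)} ∈ Ω^{n-1}(S^{n-1})` of total integral `1`, i.e. representing the
generator `α ∈ E_n^{0,n-1} ≅ H^{n-1}(S^{n-1})`; by definition of the Euler class
`[−δψ̄^{(0)}] = e` (since `d_n(α) = [δψ̄^{(0)}]` and `e = −d_n(α)`). -/
def UnitZigZag (ψ : GCT D.Gb D.FmB) : Prop :=
  IsDeg (n - 1) ψ ∧ (∀ k l, 1 ≤ l → DT D.pullB D.dB ψ k l = 0) ∧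
    ∀ h : n - 1 + 1 = n, D.intB (n - 1) h (ψ 0 (n - 1) Fin.elim0) = 1

/-- `w` is a real `n`-cocycle of `Diff₀(S^{n-1})` with `δψ̄^{(0)} = w · 1` for a unit
zig-zag `ψ̄`; by the spectral-sequence definition of the Euler class of foliated
`S^{n-1}`-bundles, the class of `-w` equals the Euler class `e`. -/
def EulerFrom (ψ : GCT D.Gb D.FmB) (w : (Fin n → D.Gb) → ℝ) : Prop :=
  D.UnitZigZag ψ ∧ ∀ g : Fin n → D.Gb, Dh D.pullB ψ n 0 g = w g • D.oneB

/-- `H^l(M,∂M;ℝ) = 0` for `0 < l < n` and `H^0(M,∂M;ℝ) = 0`. -/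
def RelAcyclic : Prop :=
  (∀ α : D.Fm 0, D.dF 0 α = 0 → D.res 0 α = 0 → α = 0) ∧
    ∀ l, l + 1 < n → ∀ α : D.Fm (l + 1), D.dF (l + 1) α = 0 → D.res (l + 1) α = 0 →
      ∃ β : D.Fm l, D.res l β = 0 ∧ D.dF l β = α

/-- `H^l(M;ℝ) = 0` for `0 < l < n`, and `H^n(M;ℝ) = 0` (so that `ω` is exact);
these follow from `H^l(M,∂M;ℝ) = 0` and `∂M ≅ S^{n-1}`. -/
def AbsAcyclic : Prop :=
  (∀ l, l + 1 < n → ∀ α : D.Fm (l + 1), D.dF (l + 1) α = 0 →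
      ∃ β : D.Fm l, D.dF l β = α) ∧
    ∃ β : D.Fm (n - 1), ∀ h : n - 1 + 1 = n,
      cast (congrArg D.Fm h) (D.dF (n - 1) β) = D.ωM

/-- The boundary is the sphere `S^{n-1}`: `H^l(∂M;ℝ) = 0` for `0 < l < n-1`. -/
def SphereBoundary : Prop :=
  ∀ l, l + 2 < n → ∀ β : D.FmB (l + 1), D.dB (l + 1) β = 0 →
    ∃ γ : D.FmB l, D.dB l γ = β

/-- `i^* : Ω^l(M) → Ω^l(∂M)` is surjective. -/
def ResSurj : Prop := ∀ l, Function.Surjective (D.res l)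

end FullGeom
/-! Applying `δ` to `dφ̄ = ω̄ + δφ̄⁽⁰⁾` and using `δδ = 0`, `δω̄ = 0` and `δd'' = -d''δ` gives
`d(δφ̄⁽⁰⁾) = 0`, so, `M` being connected, `δφ̄⁽⁰⁾(g)` is a constant `c(g)`. By condition (3),
`i^*δφ̄⁽⁰⁾(g)` only depends on the restrictions `gₖ|_{∂M}`; for two tuples with the same
restrictions the difference of the constants is a closed function vanishing on `∂M`, hence zero
as `H⁰(M,∂M) = 0`. So `c = r^*χ`, and `χ` is unique and a cocycle because `r` is surjective and
`r^*δχ = δδφ̄⁽⁰⁾ = 0`. -/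

section GroupDel

variable {G : Type} [Group G] {V : Type} [AddCommGroup V] [Module ℝ V]

def groupDel (π : G → V →ₗ[ℝ] V) (k : ℕ) :
    ((Fin k → G) → V) →ₗ[ℝ] (Fin (k + 1) → G) → V where
  toFun c g :=
    c (Fin.tail g)
      + ∑ i : Fin k, ((-1 : ℝ) ^ ((i : ℕ) + 1)) • c (Fin.contractNth i.castSucc (· * ·) g)
      + ((-1 : ℝ) ^ (k + 1)) • π (g (Fin.last k)) (c (Fin.init g))
  map_add' c c' := by
    ext g
    simp only [Pi.add_apply, smul_add, map_add, Finset.sum_add_distrib]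
    abel
  map_smul' a c := by
    ext g
    simp only [Pi.smul_apply, map_smul, smul_add, Finset.smul_sum, smul_comm a,
      RingHom.id_apply]

lemma groupDel_apply (π : G → V →ₗ[ℝ] V) (k : ℕ) (c : (Fin k → G) → V) (g : Fin (k + 1) → G) :
    groupDel π k c g =
      c (Fin.tail g)
        + ∑ i : Fin k, ((-1 : ℝ) ^ ((i : ℕ) + 1)) • c (Fin.contractNth i.castSucc (· * ·) g)
        + ((-1 : ℝ) ^ (k + 1)) • π (g (Fin.last k)) (c (Fin.init g)) :=
  rfl

lemma gdel_eq_groupDel {F : ℕ → Type} [∀ l, AddCommGroup (F l)] [∀ l, Module ℝ (F l)]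
    (pull : ∀ l, G → F l →ₗ[ℝ] F l) (k l : ℕ) (c : GC G F k l) :
    gdel pull k l c = groupDel (pull l) k c :=
  rfl

lemma rdel_eq_groupDel (k : ℕ) (c : (Fin k → G) → ℝ) :
    rdel k c = groupDel (fun _ => LinearMap.id) k c :=
  rfl

lemma map_groupDel {W : Type} [AddCommGroup W] [Module ℝ W] (π : G → V →ₗ[ℝ] V)
    (π' : G → W →ₗ[ℝ] W) (T : V →ₗ[ℝ] W) (hT : ∀ a x, T (π a x) = π' a (T x)) (k : ℕ)
    (c : (Fin k → G) → V) (g : Fin (k + 1) → G) :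
    T (groupDel π k c g) = groupDel π' k (fun t => T (c t)) g := by
  simp only [groupDel_apply, map_add, map_sum, map_smul, hT]

lemma groupDel_comp_hom {H : Type} [Group H] (f : G →* H) (π : H → V →ₗ[ℝ] V) (k : ℕ)
    (c : (Fin k → H) → V) (g : Fin (k + 1) → G) :
    groupDel π k c (f ∘ g) = groupDel (fun a => π (f a)) k (fun t => c (f ∘ t)) g := by
  simp only [groupDel_apply, ← Fin.comp_tail, ← Fin.comp_init,
    Fin.comp_contractNth _ _ (map_mul f), Function.comp_apply]

lemma prod_ofFn_contractNth_castSucc {k : ℕ} (g : Fin (k + 1) → G) (i : Fin k) :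
    (List.ofFn (Fin.contractNth i.castSucc (· * ·) g)).prod = (List.ofFn g).prod := by
  have hlast : ∀ {m} (f : Fin m → G), Fin.partialProd f (Fin.last m) = (List.ofFn f).prod := by
    intro m f
    simp [Fin.partialProd, List.take_of_length_le]
  have h := congrFun (Fin.partialProd_contractNth g i.castSucc) (Fin.last k)
  rwa [Function.comp_apply, hlast, Fin.succAbove_of_le_castSucc _ _ (by simp [Fin.le_def]),
    Fin.succ_last, hlast] at h

variable (π : G → V →ₗ[ℝ] V) (hπ1 : ∀ x, π 1 x = x) (hπm : ∀ a b x, π (a * b) x = π b (π a x))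

def Representation.ofRightAction : Representation ℝ G V where
  toFun a := π a⁻¹
  map_one' := by ext x; simp [hπ1]
  map_mul' a b := by ext x; simp [hπm]

/-- Twisting by `(g₁⋯gₘ)⁻¹` turns `groupDel π` into Mathlib's inhomogeneous differential for the
left action `g ↦ π g⁻¹`. -/
def twist (m : ℕ) (c : (Fin m → G) → V) : (Fin m → G) → V := fun g =>
  π ((List.ofFn g).prod)⁻¹ (c g)

lemma twist_groupDel (m : ℕ) (c : (Fin m → G) → V) :
    twist π (m + 1) (groupDel π m c)
      = (inhomogeneousCochains.d (Rep.of (Representation.ofRightAction π hπ1 hπm)) m).hom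
          (twist π m c) := by
  funext g
  rw [inhomogeneousCochains.d_hom_apply, Fin.sum_univ_castSucc]
  have hρ : ∀ (a : G) (x : V),
      ((Rep.of (Representation.ofRightAction π hπ1 hπm)).ρ a) x = π a⁻¹ x := fun a x => rfl
  have hcontr_last : Fin.contractNth (Fin.last m) (· * ·) g = Fin.init g := by
    funext j
    rw [Fin.contractNth_apply_of_lt _ _ _ _ (by simp)]
    rfl
  simp only [twist, groupDel_apply, map_add, map_sum, map_smul, hρ, hcontr_last,
    prod_ofFn_contractNth_castSucc, Fin.val_castSucc, Fin.val_last, ← hπm, add_assoc]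
  congr 3
  · rw [List.ofFn_succ, List.prod_cons, mul_inv_rev]
  · rw [List.ofFn_succ' g, List.prod_concat, mul_inv_rev, ← mul_assoc, mul_inv_cancel, one_mul]
    rfl

include hπ1 hπm in
lemma groupDel_groupDel (k : ℕ) (c : (Fin k → G) → V) :
    groupDel π (k + 1) (groupDel π k c) = 0 := by
  funext g
  have h : twist π (k + 2) (groupDel π (k + 1) (groupDel π k c)) g = 0 := by
    rw [twist_groupDel π hπ1 hπm, twist_groupDel π hπ1 hπm]
    exact congrArg (fun f => f.hom (twist π k c) g)
      (groupCohomology.inhomogeneousCochains.d_comp_d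
        (A := Rep.of (Representation.ofRightAction π hπ1 hπm)) (n := k))
  simpa [twist, ← hπm, hπ1] using congrArg (π (List.ofFn g).prod) h

end GroupDel

section TotalComplex

variable {G : Type} [Group G] {F : ℕ → Type} [∀ l, AddCommGroup (F l)] [∀ l, Module ℝ (F l)]
  (pull : ∀ l, G → F l →ₗ[ℝ] F l) (dF : ∀ l, F l →ₗ[ℝ] F (l + 1))

lemma Dh_add (c c' : GCT G F) : Dh pull (c + c') = Dh pull c + Dh pull c' := by
  funext k l
  cases k with
  | zero => simp [Dh]
  | succ k => simp only [Dh, Pi.add_apply, gdel_eq_groupDel, map_add]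

lemma Dh_apply_of_forall_eq_zero {c : GCT G F} {l : ℕ} (hc : ∀ k, c k l = 0) (k : ℕ) :
    Dh pull c k l = 0 := by
  cases k with
  | zero => rfl
  | succ k => simp only [Dh, gdel_eq_groupDel, hc, map_zero]

lemma Dh_Dh (hone : ∀ l (x : F l), pull l 1 x = x)
    (hmul : ∀ l a b (x : F l), pull l (a * b) x = pull l b (pull l a x)) (c : GCT G F) :
    Dh pull (Dh pull c) = 0 := by
  funext k l
  match k with
  | 0 => rfl
  | 1 => simp only [Dh, gdel_eq_groupDel, map_zero]; rfl
  | k + 2 => exact groupDel_groupDel (pull l) (hone l) (hmul l) k (c k l)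

lemma Dh_Dv (hcomm : ∀ l a (x : F l), dF l (pull l a x) = pull (l + 1) a (dF l x))
    (c : GCT G F) : Dh pull (Dv dF c) = -Dv dF (Dh pull c) := by
  funext k l g
  match k, l with
  | 0, 0 => simp [Dh, Dv]
  | 0, l + 1 => simp [Dh, Dv, dvv]
  | k + 1, 0 => simp [Dh, Dv, gdel_eq_groupDel]
  | k + 1, l + 1 =>
    have hdvv : dvv dF k l (c k l) = ((-1 : ℝ) ^ k) • fun t => dF l (c k l t) := rfl
    simp only [Dh, Dv, gdel_eq_groupDel, hdvv, map_smul, Pi.smul_apply, Pi.neg_apply, dvv,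
      map_groupDel (pull l) (pull (l + 1)) (dF l) (hcomm l), pow_succ, mul_neg_one, neg_smul,
      neg_neg]

end TotalComplex

namespace FullGeom

variable {n : ℕ} (D : FullGeom n)

lemma oneF_ne_zero : D.oneF ≠ 0 := by
  intro h
  have hω : D.ωM = 0 := by
    rw [← D.oneF_wedge n D.ωM, h, ← zero_smul ℝ (0 : D.Fm 0), D.wedge_smul_left, zero_smul]
  simpa [hω] using D.vol_pos

lemma pull_omCM (l : ℕ) (a : D.GM) (k : ℕ) (t : Fin k → D.GM) :
    D.pull l a (D.omCM k l t) = D.omCM k l t := by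
  unfold omCM
  split_ifs with h
  · obtain ⟨rfl, rfl⟩ := h
    exact D.pull_ωM a
  · exact map_zero _

lemma Dh_omCM : Dh D.pull D.omCM = 0 := by
  funext k l g
  match k with
  | 0 => rfl
  | 1 =>
    simp [Dh, gdel_eq_groupDel, groupDel_apply, pull_omCM,
      Subsingleton.elim (Fin.init g) (Fin.tail g)]
  | k + 2 =>
    have h0 : D.omCM (k + 1) l = 0 := by funext t; simp [omCM]
    simp [Dh, gdel_eq_groupDel, h0]

lemma dF_Dh_eq_zero {φb : GCT D.GM D.Fm} (hφb : D.BarPhi φb) (g : Fin n → D.GM) :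
    D.dF 0 (Dh D.pull φb n 0 g) = 0 := by
  obtain ⟨-, hd, -, -⟩ := hφb
  have hDhDv : Dh D.pull (Dv D.dF φb)
      = Dh D.pull (fun k l => if k = n ∧ l = 0 then Dh D.pull φb k l else 0) := by
    have h := congrArg (Dh D.pull) hd
    rwa [DT, Dh_add, Dh_add, Dh_Dh D.pull D.pull_one D.pull_mul, Dh_omCM, zero_add,
      zero_add] at h
  have h := congrFun (congrFun (congrFun (Dh_Dv D.pull D.dF D.pull_dF φb) n) 1) g
  rw [hDhDv, Dh_apply_of_forall_eq_zero D.pull (by simp)] at h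
  have h' : ((-1 : ℝ) ^ n) • D.dF 0 (Dh D.pull φb n 0 g) = 0 := by
    simpa [Dv, dvv, eq_comm] using h
  exact (smul_eq_zero.mp h').resolve_left (pow_ne_zero _ (by norm_num))

lemma res_Dh_factorsThrough {φb : GCT D.GM D.Fm} (hφb : D.BarPhi φb) :
    Function.FactorsThrough (fun g => D.res 0 (Dh D.pull φb n 0 g)) (D.rHom ∘ ·) := by
  obtain ⟨-, -, -, hres⟩ := hφb
  cases n with
  | zero => intro g g' _; rfl
  | succ K =>
    have hφ : Function.FactorsThrough (fun t => D.res 0 (φb K 0 t)) (D.rHom ∘ ·) := by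
      intro t t' h
      cases K with
      | zero => rw [Subsingleton.elim t t']
      | succ K => exact hres (K + 1) 0 (by omega) t t' (congrFun h)
    have key : ∀ g, D.res 0 (Dh D.pull φb (K + 1) 0 g)
        = groupDel (D.pullB 0) K (Function.extend (D.rHom ∘ ·) (fun t => D.res 0 (φb K 0 t)) 0)
            (D.rHom ∘ g) := by
      intro g
      rw [groupDel_comp_hom]
      simp only [hφ.extend_apply]
      exact map_groupDel _ _ _ (D.res_pull 0) _ _ g
    intro g g' h
    simp only [key, h]

lemma exists_Dh_eq_smul_oneF {φb : GCT D.GM D.Fm} (hφb : D.BarPhi φb) :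
    ∃ c : (Fin n → D.GM) → ℝ, ∀ g, Dh D.pull φb n 0 g = c g • D.oneF :=
  ⟨_, fun g => (D.connM _ (D.dF_Dh_eq_zero hφb g)).choose_spec⟩

lemma factorsThrough_of_Dh_eq_smul_oneF (hrel : D.RelAcyclic) {φb : GCT D.GM D.Fm}
    (hφb : D.BarPhi φb) {c : (Fin n → D.GM) → ℝ}
    (hc : ∀ g, Dh D.pull φb n 0 g = c g • D.oneF) :
    c.FactorsThrough (D.rHom ∘ ·) := by
  intro g g' h
  apply smul_left_injective ℝ D.oneF_ne_zero
  show c g • D.oneF = c g' • D.oneF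
  rw [← hc, ← hc, ← sub_eq_zero]
  apply hrel.1
  · rw [map_sub, D.dF_Dh_eq_zero hφb, D.dF_Dh_eq_zero hφb, sub_self]
  · rw [map_sub, sub_eq_zero]
    exact D.res_Dh_factorsThrough hφb h

variable {D} {φb : GCT D.GM D.Fm} {χ : (Fin n → D.Gb) → ℝ}

lemma IsChi.unique (hχ : D.IsChi φb χ) {χ' : (Fin n → D.Gb) → ℝ} (hχ' : D.IsChi φb χ') :
    χ' = χ := by
  funext γ
  obtain ⟨g, rfl⟩ := D.rHom_surj.comp_left γ
  exact smul_left_injective ℝ D.oneF_ne_zero ((hχ' g).symm.trans (hχ g))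

lemma IsChi.rdel_eq_zero (hχ : D.IsChi φb χ) : rdel n χ = 0 := by
  funext γ
  obtain ⟨g, rfl⟩ := D.rHom_surj.comp_left γ
  apply smul_left_injective ℝ D.oneF_ne_zero
  show rdel n χ (D.rHom ∘ g) • D.oneF = (0 : ℝ) • D.oneF
  calc rdel n χ (D.rHom ∘ g) • D.oneF
      = groupDel (D.pull 0) n (fun t => χ (D.rHom ∘ t) • D.oneF) g := by
        rw [rdel_eq_groupDel, groupDel_comp_hom, ← LinearMap.toSpanSingleton_apply]
        exact map_groupDel _ _ _ (fun a x => by simp [D.pull_oneF]) _ _ g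
    _ = groupDel (D.pull 0) n (Dh D.pull φb n 0) g := by
        rw [show (fun t => χ (D.rHom ∘ t) • D.oneF) = Dh D.pull φb n 0 from
          funext fun t => (hχ t).symm]
    _ = Dh D.pull (Dh D.pull φb) (n + 1) 0 g := rfl
    _ = 0 := by rw [Dh_Dh D.pull D.pull_one D.pull_mul]; rfl
    _ = (0 : ℝ) • D.oneF := (zero_smul ℝ _).symm

end FullGeom

theorem exists_unique_chi_general (n : ℕ) (D : FullGeom n)
    (hrel : D.RelAcyclic)
    (φb : GCT D.GM D.Fm) (hφb : D.BarPhi φb) :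
    ∃ χ : (Fin n → D.Gb) → ℝ,
      D.IsChi φb χ ∧ rdel n χ = 0 ∧
        ∀ χ' : (Fin n → D.Gb) → ℝ, D.IsChi φb χ' → χ' = χ := by
  obtain ⟨c, hc⟩ := D.exists_Dh_eq_smul_oneF hφb
  have hfac := D.factorsThrough_of_Dh_eq_smul_oneF hrel hφb hc
  have hχ : D.IsChi φb (Function.extend (D.rHom ∘ ·) c 0) := fun g => by
    rw [hc, ← hfac.extend_apply 0 g]
    rfl
  exact ⟨_, hχ, hχ.rdel_eq_zero, fun _ hχ' => hχ.unique hχ'⟩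

theorem exists_unique_chi (n : ℕ) (hn : 1 ≤ n) (D : FullGeom n)
    (hrel : D.RelAcyclic) (habs : D.AbsAcyclic) (hsph : D.SphereBoundary)
    (hsurj : D.ResSurj)
    (φb : GCT D.GM D.Fm) (hφb : D.BarPhi φb) :
    ∃ χ : (Fin n → D.Gb) → ℝ,
      D.IsChi φb χ ∧ rdel n χ = 0 ∧
        ∀ χ' : (Fin n → D.Gb) → ℝ, D.IsChi φb χ' → χ' = χ :=
  exists_unique_chi_general n D hrel φb hφb

end TsuboiEuler
end
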